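/- Q-resolution is sound: if C₁ and C₂ are non-tautological clauses of a closed PCNF Q̂.φ, p is an existential variable with p ∈ C₁ and ¬p ∈ C₂, and the tentative Q-resolvent C' = (UR(C₁)\{p}) ∪ (UR(C₂)\{¬p}) is non-tautological, then Q̂.φ is satisfiable if and only if Q̂.(φ ∧ C') is satisfiable. -/

import Mathlib

/-- Variables are natural numbers. -/
abbrev Var := Nat

/-- A literal: a variable with a polarity (`pos = true` means positive). -/
structure Lit where
  var : Var
  pos : Bool
deriving DecidableEq, Repr

abbrev Clause := List Lit
abbrev Cube := List Lit
abbrev CNF := List Clause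

abbrev Assignment := Var → Bool

def Lit.eval (α : Assignment) (l : Lit) : Bool :=
  if l.pos then α l.var else !(α l.var)

def Clause.eval (α : Assignment) (C : Clause) : Bool := C.any (Lit.eval α)

def Cube.evalCube (α : Assignment) (C : Cube) : Bool := C.all (Lit.eval α)

def CNF.eval (α : Assignment) (φ : CNF) : Bool := φ.all (Clause.eval α)

/-- A flat quantifier prefix: list of (quantifier, variable); `true` = ∃, `false` = ∀. -/
abbrev QPrefix := List (Bool × Var)

/-- Recursive semantics of closed prenex QBFs, relative to an ambient assignment `α`. -/
def QSat (α : Assignment) : QPrefix → (Assignment → Bool) → Prop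
  | [], m => m α = true
  | (true, x) :: p, m => ∃ b, QSat (Function.update α x b) p m
  | (false, x) :: p, m => ∀ b, QSat (Function.update α x b) p m

/-- Satisfiability of a closed prenex formula. -/
def Sat (L : QPrefix) (m : Assignment → Bool) : Prop :=
  QSat (fun _ => false) L m

def pvars (L : QPrefix) : List Var := L.map Prod.snd

/-- The quantifier of a variable in the prefix (`true` = ∃). -/
def quantOf (L : QPrefix) (x : Var) : Bool :=
  ((L.find? (fun p => p.2 == x)).map Prod.fst).getD true

/-- Position of a variable in the linear prefix ordering. -/
def varIdx (L : QPrefix) (x : Var) : Nat := (pvars L).idxOf x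

def Clause.vars (C : Clause) : List Var := C.map Lit.var
def CNF.vars (φ : CNF) : List Var := φ.flatMap Clause.vars

/-- A closed PCNF: all matrix variables are quantified, and no variable twice. -/
def Closed (L : QPrefix) (φ : CNF) : Prop :=
  (∀ v ∈ CNF.vars φ, v ∈ pvars L) ∧ (pvars L).Nodup

def existLits (L : QPrefix) (C : List Lit) : List Lit :=
  C.filter (fun l => quantOf L l.var)

def univLits (L : QPrefix) (C : List Lit) : List Lit :=
  C.filter (fun l => !(quantOf L l.var))

/-- Universal reduction of a clause: remove universal literals larger than all
existential literals of the clause. -/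
def univRed (L : QPrefix) (C : Clause) : Clause :=
  C.filter (fun l =>
    !((!(quantOf L l.var)) &&
      (existLits L C).all (fun l' => decide (varIdx L l'.var < varIdx L l.var))))

/-- Existential reduction of a cube: remove existential literals larger than all
universal literals of the cube. -/
def exRed (L : QPrefix) (C : Cube) : Cube :=
  C.filter (fun l =>
    !((quantOf L l.var) &&
      (univLits L C).all (fun l' => decide (varIdx L l'.var < varIdx L l.var))))

def Lit.neg (l : Lit) : Lit := ⟨l.var, !l.pos⟩

/-- Tautological clause / contradictory cube: contains complementary literals. -/
def Tauto (C : List Lit) : Prop := ∃ l ∈ C, Lit.neg l ∈ C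

/-- Tentative Q-qResolvent of two clauses on existential pivot `p`. -/
def qResolvent (L : QPrefix) (C₁ C₂ : Clause) (p : Var) : Clause :=
  (univRed L C₁).filter (fun l => l ≠ ⟨p, true⟩) ++
  (univRed L C₂).filter (fun l => l ≠ ⟨p, false⟩)

/-- Q-resolution derivations from the clauses of `φ`. -/
inductive QDer (L : QPrefix) (φ : CNF) : Clause → Prop
  | ax {C} : C ∈ φ → QDer L φ C
  | ur {C} : QDer L φ C → QDer L φ (univRed L C)
  | res {C₁ C₂} {p : Var} :
      QDer L φ C₁ → QDer L φ C₂ →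
      ¬ Tauto C₁ → ¬ Tauto C₂ →
      quantOf L p = true → (⟨p, true⟩ : Lit) ∈ C₁ → (⟨p, false⟩ : Lit) ∈ C₂ →
      ¬ Tauto (qResolvent L C₁ C₂ p) →
      QDer L φ (qResolvent L C₁ C₂ p)

/-- The initial cube of a (total) model `α`: conjunction of the literals set by `α`,
in prefix order. -/
def initCube (L : QPrefix) (α : Assignment) : Cube :=
  L.map (fun p => ⟨p.2, α p.2⟩)

/-- Tentative cube qResolvent of two cubes on universal pivot `x`. -/
def cubeResolvent (L : QPrefix) (C₁ C₂ : Cube) (x : Var) : Cube :=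
  (exRed L C₁).filter (fun l => l ≠ ⟨x, true⟩) ++
  (exRed L C₂).filter (fun l => l ≠ ⟨x, false⟩)

/-- Cube derivations: model generation rule, existential reduction, cube resolution. -/
inductive CubeDer (L : QPrefix) (φ : CNF) : Cube → Prop
  | init (α : Assignment) : CNF.eval α φ = true → CubeDer L φ (initCube L α)
  | er {C} : CubeDer L φ C → CubeDer L φ (exRed L C)
  | res {C₁ C₂} {x : Var} :
      CubeDer L φ C₁ → CubeDer L φ C₂ →
      ¬ Tauto C₁ → ¬ Tauto C₂ →
      quantOf L x = false → (⟨x, true⟩ : Lit) ∈ C₁ → (⟨x, false⟩ : Lit) ∈ C₂ →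
      ¬ Tauto (cubeResolvent L C₁ C₂ x) →
      CubeDer L φ (cubeResolvent L C₁ C₂ x)

/-- Block-structured prefix: list of (quantifier, block of variables). -/
abbrev BPrefix := List (Bool × List Var)

def flatP (P : BPrefix) : QPrefix := P.flatMap (fun b => b.2.map (fun x => (b.1, x)))

def SatB (P : BPrefix) (m : Assignment → Bool) : Prop := Sat (flatP P) m

/-- Closed PCNF with block prefix. -/
def ClosedB (P : BPrefix) (φ : CNF) : Prop :=
  (∀ v ∈ CNF.vars φ, v ∈ pvars (flatP P)) ∧
  (∀ v ∈ pvars (flatP P), v ∈ CNF.vars φ) ∧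
  (pvars (flatP P)).Nodup

/-!
Universal reduction is sound. Let `C` be a non-tautological clause of the matrix and cut the
prefix right after the last existential variable of `C`. If, when the cut is reached, the part
of `C` kept by universal reduction is still false, then the universal player can falsify all
the remaining literals of `C` at once: they are universal, quantified after the cut, and pairwise
non-complementary. Since the matrix implies `C`, no existential strategy survives this, so the
matrix already implies the reduced clause at the cut. Hence adding `UR(C₁)` and `UR(C₂)` to the
matrix preserves truth, and the Q-resolvent is their ordinary propositional resolvent.
-/

theorem Lit.eval_congr {α β : Assignment} {l : Lit} (h : α l.var = β l.var) :
    l.eval α = l.eval β := by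
  simp only [Lit.eval, h]

theorem Clause.eval_congr {α β : Assignment} {C : Clause} (h : ∀ l ∈ C, α l.var = β l.var) :
    C.eval α = C.eval β := by
  rw [Bool.eq_iff_iff]
  simp only [Clause.eval, List.any_eq_true]
  exact exists_congr fun l => and_congr_right fun hl => by rw [Lit.eval_congr (h l hl)]

theorem exists_clause_eval_eq_false {C : Clause} (hC : ¬ Tauto C) :
    ∃ δ : Assignment, C.eval δ = false := by
  refine ⟨fun v => decide ((⟨v, false⟩ : Lit) ∈ C), ?_⟩
  simp only [Clause.eval, List.any_eq_false]
  rintro ⟨v, _ | _⟩ hl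
  · simp [Lit.eval, hl]
  · have : (⟨v, false⟩ : Lit) ∉ C := fun h => hC ⟨_, hl, h⟩
    simp [Lit.eval, this]

theorem Clause.eval_qResolvent {γ : Assignment} (L : QPrefix) {C₁ C₂ : Clause} (p : Var)
    (h₁ : (univRed L C₁).eval γ) (h₂ : (univRed L C₂).eval γ) :
    (qResolvent L C₁ C₂ p).eval γ := by
  simp only [qResolvent, Clause.eval, List.any_append, Bool.or_eq_true, List.any_eq_true,
    List.mem_filter] at h₁ h₂ ⊢
  obtain ⟨l₁, hl₁, hγ₁⟩ := h₁
  obtain ⟨l₂, hl₂, hγ₂⟩ := h₂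
  cases hp : γ p
  · refine .inl ⟨l₁, ⟨hl₁, decide_eq_true ?_⟩, hγ₁⟩
    rintro rfl
    simp [Lit.eval, hp] at hγ₁
  · refine .inr ⟨l₂, ⟨hl₂, decide_eq_true ?_⟩, hγ₂⟩
    rintro rfl
    simp [Lit.eval, hp] at hγ₂

theorem pvars_append (K M : QPrefix) : pvars (K ++ M) = pvars K ++ pvars M :=
  List.map_append

theorem varIdx_lt_length {L : QPrefix} {v : Var} (hv : v ∈ pvars L) : varIdx L v < L.length :=
  (List.length_map (f := Prod.snd) (as := L)) ▸ List.idxOf_lt_length_iff.mpr hv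

theorem varIdx_append_lt_iff {K M : QPrefix} {v : Var} :
    varIdx (K ++ M) v < K.length ↔ v ∈ pvars K := by
  have hlen : (pvars K).length = K.length := List.length_map _
  unfold varIdx
  rw [pvars_append]
  by_cases hK : v ∈ pvars K
  · rw [List.idxOf_append_of_mem hK, ← hlen]
    exact iff_of_true (List.idxOf_lt_length_iff.mpr hK) hK
  · rw [List.idxOf_append_of_notMem hK, iff_false_intro hK, iff_false, hlen]
    omega

theorem mk_quantOf_mem {L : QPrefix} {v : Var} (hv : v ∈ pvars L) : (quantOf L v, v) ∈ L := by
  obtain ⟨a, ha⟩ := Option.isSome_iff_exists.mp <| show (L.find? fun a => a.2 == v).isSome by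
    obtain ⟨⟨q, _⟩, hq, rfl⟩ := List.mem_map.mp hv
    exact List.find?_isSome.mpr ⟨(q, _), hq, by simp⟩
  obtain rfl : a.2 = v := by simpa using List.find?_some ha
  rw [quantOf, ha]
  exact List.mem_of_find?_eq_some ha

theorem mem_univRed {L : QPrefix} {E : Clause} {l : Lit} :
    l ∈ univRed L E ↔ l ∈ E ∧
      (quantOf L l.var = true ∨ ∃ e ∈ existLits L E, varIdx L l.var ≤ varIdx L e.var) := by
  simp [univRed]

theorem exists_append_univRed {L : QPrefix} {E : Clause} (hEL : ∀ l ∈ E, l.var ∈ pvars L) :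
    ∃ K M, L = K ++ M ∧ (∀ l ∈ univRed L E, l.var ∈ pvars K) ∧
      ∀ l ∈ E, l ∉ univRed L E → (false, l.var) ∈ M := by
  set n := (existLits L E).toFinset.sup fun e => varIdx L e.var + 1
  have hex : ∀ e ∈ existLits L E, varIdx L e.var < n := fun e he =>
    Finset.le_sup (f := fun e : Lit => varIdx L e.var + 1) (List.mem_toFinset.mpr he)
  have hsplit := L.take_append_drop n
  have hmemK : ∀ {v}, v ∈ pvars L → (v ∈ pvars (L.take n) ↔ varIdx L v < n) := fun hv => by
    rw [← varIdx_append_lt_iff, hsplit, List.length_take]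
    exact ⟨fun h => h.trans_le (min_le_left _ _), fun h => lt_min h (varIdx_lt_length hv)⟩
  refine ⟨L.take n, L.drop n, hsplit.symm, fun l hl => ?_, fun l hlE hl => ?_⟩
  · obtain ⟨hlE, hq | ⟨e, he, hle⟩⟩ := mem_univRed.mp hl
    · exact (hmemK (hEL l hlE)).mpr (hex l (List.mem_filter.mpr ⟨hlE, hq⟩))
    · exact (hmemK (hEL l hlE)).mpr (hle.trans_lt (hex e he))
  · obtain ⟨hq, hafter⟩ : quantOf L l.var = false ∧
        ∀ e ∈ existLits L E, varIdx L e.var < varIdx L l.var := by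
      simpa [mem_univRed, hlE] using hl
    have hnK : l.var ∉ pvars (L.take n) := by
      rw [hmemK (hEL l hlE), not_lt]
      exact Finset.sup_le fun e he => hafter e (List.mem_toFinset.mp he)
    have hmem := mk_quantOf_mem (hEL l hlE)
    rw [hq, ← hsplit, List.mem_append] at hmem
    exact hmem.resolve_left fun h => hnK (List.mem_map_of_mem h)

theorem forall_notMem_pvars_cons {α γ : Assignment} {q : Bool} {x : Var} {b : Bool}
    {L : QPrefix} (h : ∀ v ∉ pvars L, γ v = Function.update α x b v) :
    ∀ v ∉ pvars ((q, x) :: L), γ v = α v := by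
  intro v hv
  simp only [pvars, List.map_cons, List.mem_cons, not_or] at hv
  rw [h v hv.2, Function.update_of_ne hv.1]

namespace QSat

theorem mono {L : QPrefix} {α : Assignment} {m m' : Assignment → Bool} (h : QSat α L m)
    (hmm' : ∀ γ, (∀ v ∉ pvars L, γ v = α v) → m γ = true → m' γ = true) :
    QSat α L m' := by
  induction L generalizing α with
  | nil => exact hmm' α (fun _ _ => rfl) h
  | cons qx L ih =>
    obtain ⟨_ | _, x⟩ := qx
    · exact fun b => ih (h b) fun γ hγ => hmm' γ (forall_notMem_pvars_cons hγ)
    · obtain ⟨b, hb⟩ := h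
      exact ⟨b, ih hb fun γ hγ => hmm' γ (forall_notMem_pvars_cons hγ)⟩

theorem append_mono {K M : QPrefix} {α : Assignment} {m m' : Assignment → Bool}
    (hM : ∀ β, QSat β M m → QSat β M m') (h : QSat α (K ++ M) m) : QSat α (K ++ M) m' := by
  induction K generalizing α with
  | nil => exact hM α h
  | cons qx K ih =>
    obtain ⟨_ | _, x⟩ := qx
    · exact fun b => ih (h b)
    · obtain ⟨b, hb⟩ := h
      exact ⟨b, ih hb⟩

theorem exists_model {M : QPrefix} {α : Assignment} {m : Assignment → Bool}
    (hM : (pvars M).Nodup) (δ : Assignment) (h : QSat α M m) :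
    ∃ γ, m γ = true ∧ (∀ v ∉ pvars M, γ v = α v) ∧ ∀ v, (false, v) ∈ M → γ v = δ v := by
  induction M generalizing α with
  | nil => exact ⟨α, h, fun _ _ => rfl, by simp⟩
  | cons qx M ih =>
    obtain ⟨q, x⟩ := qx
    obtain ⟨hxM, hM'⟩ := List.nodup_cons.mp (show (x :: pvars M).Nodup from hM)
    cases q
    · obtain ⟨γ, hm, hγα, hγδ⟩ := ih hM' (h (δ x))
      refine ⟨γ, hm, forall_notMem_pvars_cons hγα, fun v hv => ?_⟩
      rcases List.mem_cons.mp hv with hv | hv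
      · obtain rfl : v = x := (Prod.mk.inj hv).2
        rw [hγα v hxM, Function.update_self]
      · exact hγδ v hv
    · obtain ⟨b, hb⟩ := h
      obtain ⟨γ, hm, hγα, hγδ⟩ := ih hM' hb
      refine ⟨γ, hm, forall_notMem_pvars_cons hγα, fun v hv => ?_⟩
      rcases List.mem_cons.mp hv with hv | hv
      · simp at hv
      · exact hγδ v hv

theorem and_clause_of_forall_tail {M : QPrefix} {β : Assignment} {m : Assignment → Bool}
    {E D : Clause} (hM : (pvars M).Nodup) (hE : ¬ Tauto E)
    (hD : ∀ l ∈ D, l.var ∉ pvars M) (hED : ∀ l ∈ E, l ∉ D → (false, l.var) ∈ M)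
    (hm : ∀ γ, m γ = true → E.eval γ = true) (h : QSat β M m) :
    QSat β M (fun γ => D.eval γ && m γ) := by
  by_cases hβ : D.eval β
  · refine h.mono fun γ hγ hmγ => ?_
    rw [Bool.and_eq_true, Clause.eval_congr fun l hl => hγ l.var (hD l hl)]
    exact ⟨hβ, hmγ⟩
  -- Otherwise the universal player falsifies all of `E` at once, contradicting `hm`.
  · obtain ⟨δ, hδ⟩ := exists_clause_eval_eq_false hE
    obtain ⟨γ, hmγ, hγβ, hγδ⟩ := exists_model hM δ h
    obtain ⟨l, hlE, hl⟩ := List.any_eq_true.mp (hm γ hmγ)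
    by_cases hlD : l ∈ D
    · rw [Lit.eval_congr (hγβ l.var (hD l hlD))] at hl
      exact absurd (List.any_eq_true.mpr ⟨l, hlD, hl⟩) hβ
    · rw [Lit.eval_congr (hγδ l.var (hED l hlE hlD))] at hl
      exact (List.any_eq_false.mp hδ l hlE hl).elim

theorem and_univRed {L : QPrefix} {α : Assignment} {m : Assignment → Bool} {E : Clause}
    (hL : (pvars L).Nodup) (hE : ¬ Tauto E) (hEL : ∀ l ∈ E, l.var ∈ pvars L)
    (hm : ∀ γ, m γ = true → E.eval γ = true) (h : QSat α L m) :
    QSat α L (fun γ => (univRed L E).eval γ && m γ) := by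
  obtain ⟨K, M, rfl, hK, hM⟩ := exists_append_univRed hEL
  rw [pvars_append, List.nodup_append] at hL
  refine append_mono (fun β => and_clause_of_forall_tail hL.2.1 hE ?_ hM hm) h
  exact fun l hl hlM => hL.2.2 _ (hK l hl) _ hlM rfl

end QSat

theorem qresolution_sound_general (L : QPrefix) (φ : CNF) (C₁ C₂ : Clause) (p : Var)
    (hclosed : Closed L φ)
    (h1 : C₁ ∈ φ) (h2 : C₂ ∈ φ)
    (ht1 : ¬ Tauto C₁) (ht2 : ¬ Tauto C₂) :
    Sat L (fun α => CNF.eval α φ) ↔ Sat L (fun α => CNF.eval α (qResolvent L C₁ C₂ p :: φ)) := by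
  obtain ⟨hvars, hnd⟩ := hclosed
  have hvarsφ : ∀ C ∈ φ, ∀ l ∈ C, l.var ∈ pvars L := fun C hC l hl =>
    hvars _ (List.mem_flatMap.mpr ⟨C, hC, List.mem_map_of_mem hl⟩)
  have hφ : ∀ C ∈ φ, ∀ γ, CNF.eval γ φ = true → C.eval γ = true := fun C hC _ hγ =>
    List.all_eq_true.mp hγ C hC
  refine ⟨fun h => ?_, fun h => h.mono fun γ _ hγ => (Bool.and_eq_true _ _ ▸ hγ).2⟩
  have h₁ := h.and_univRed hnd ht1 (hvarsφ C₁ h1) (hφ C₁ h1)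
  have h₂ := h₁.and_univRed hnd ht2 (hvarsφ C₂ h2) fun γ hγ =>
    hφ C₂ h2 γ ((Bool.and_eq_true _ _).mp hγ).2
  refine h₂.mono fun γ _ hγ => ?_
  simp only [Bool.and_eq_true] at hγ
  exact (Bool.and_eq_true _ _).mpr ⟨Clause.eval_qResolvent L p hγ.2.1 hγ.1, hγ.2.2⟩

/-- Q-resolution is sound. -/
theorem qresolution_sound (L : QPrefix) (φ : CNF) (C₁ C₂ : Clause) (p : Var)
    (hclosed : Closed L φ)
    (h1 : C₁ ∈ φ) (h2 : C₂ ∈ φ)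
    (ht1 : ¬ Tauto C₁) (ht2 : ¬ Tauto C₂)
    (hp : quantOf L p = true)
    (hp1 : (⟨p, true⟩ : Lit) ∈ C₁) (hp2 : (⟨p, false⟩ : Lit) ∈ C₂)
    (ht : ¬ Tauto (qResolvent L C₁ C₂ p)) :
    Sat L (fun α => CNF.eval α φ) ↔ Sat L (fun α => CNF.eval α (qResolvent L C₁ C₂ p :: φ)) :=
  qresolution_sound_general L φ C₁ C₂ p hclosed h1 h2 ht1 ht2
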